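/- arXiv:2511.05223 — 3 statements merged into one kernel-verified Lean document; each statement's English description precedes it below -/
import Mathlib

section
/- For the Ising measure mu_J on {-1,1}^n with symmetric interaction matrix J (zero external field), the single-bond acceptance probability p_J(l,k | sigma, sigma') = mu_J(S_l(sigma,sigma'_k)) mu_J(S_k(sigma',sigma_l)) / (mu_J(sigma)mu_J(sigma') + mu_J(S_l(sigma,sigma'_k))mu_J(S_k(sigma',sigma_l))) satisfies p_J(l,k|sigma,sigma') >= 1/(1 + e^{4 Jbar}), where Jbar = max_i sum_j |J_{i,j}| and S_l(sigma,a) denotes sigma with its l-th spin replaced by a. -/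
open Finset Real

/-- Spin value of a Boolean: `true ↦ 1`, `false ↦ -1`. -/
noncomputable def spin (b : Bool) : ℝ := if b then 1 else -1

/-- Energy of the zero-field Ising model with interaction `J`. -/
noncomputable def isingEnergy0 {n : ℕ} (J : Matrix (Fin n) (Fin n) ℝ)
    (σ : Fin n → Bool) : ℝ :=
  (1 / 2) * ∑ i, ∑ j, J i j * spin (σ i) * spin (σ j)

/-- The (zero-field) Ising measure `μ_J(σ) = exp(E σ)/Z`. -/
noncomputable def isingMeasure0 {n : ℕ} (J : Matrix (Fin n) (Fin n) ℝ)
    (σ : Fin n → Bool) : ℝ :=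
  Real.exp (isingEnergy0 J σ) / ∑ τ : Fin n → Bool, Real.exp (isingEnergy0 J τ)

lemma abs_spin (b : Bool) : |spin b| = 1 := by
  cases b <;> simp [spin]

lemma energy_update_le {n : ℕ} (J : Matrix (Fin n) (Fin n) ℝ)
    (hJsymm : J.IsSymm) (Jbar : ℝ) (hJbar : ∀ i, ∑ j, |J i j| ≤ Jbar)
    (ℓ : Fin n) (σ : Fin n → Bool) (a : Bool) :
    isingEnergy0 J σ - isingEnergy0 J (Function.update σ ℓ a) ≤ 2 * Jbar := by
  set τ := Function.update σ ℓ a with hτ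
  set s : Fin n → ℝ := fun i => spin (σ i) with hs
  set t : Fin n → ℝ := fun i => spin (τ i) with ht
  have hst : ∀ i, i ≠ ℓ → t i = s i := by
    intro i hi; simp [ht, hs, hτ, Function.update_of_ne hi]
  have hd2 : ∀ i j, |s i * s j - t i * t j| ≤ 2 := by
    intro i j
    calc |s i * s j - t i * t j| ≤ |s i * s j| + |t i * t j| := abs_sub _ _
    _ ≤ 2 := by rw [abs_mul, abs_mul, hs, ht]; simp [abs_spin]; norm_num
  have hd0 : ∀ i j, i ≠ ℓ → j ≠ ℓ → s i * s j - t i * t j = 0 := by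
    intro i j hi hj; rw [hst i hi, hst j hj]; ring
  have hEdiff : isingEnergy0 J σ - isingEnergy0 J τ
      = (1/2) * ∑ i, ∑ j, J i j * (s i * s j - t i * t j) := by
    unfold isingEnergy0
    rw [← mul_sub, ← Finset.sum_sub_distrib]
    congr 1
    refine Finset.sum_congr rfl fun i _ => ?_
    rw [← Finset.sum_sub_distrib]
    refine Finset.sum_congr rfl fun j _ => ?_
    ring
  have habs : |∑ i, ∑ j, J i j * (s i * s j - t i * t j)| ≤ 4 * Jbar := by
    calc |∑ i, ∑ j, J i j * (s i * s j - t i * t j)|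
        ≤ ∑ i, ∑ j, |J i j * (s i * s j - t i * t j)| := by
          refine (Finset.abs_sum_le_sum_abs _ _).trans ?_
          exact Finset.sum_le_sum fun i _ => Finset.abs_sum_le_sum_abs _ _
      _ = (∑ j, |J ℓ j * (s ℓ * s j - t ℓ * t j)|)
          + ∑ i ∈ Finset.univ.erase ℓ, ∑ j, |J i j * (s i * s j - t i * t j)| :=
          (Finset.add_sum_erase _ _ (Finset.mem_univ ℓ)).symm
      _ ≤ (∑ j, 2 * |J ℓ j|) + ∑ i ∈ Finset.univ.erase ℓ, 2 * |J i ℓ| := by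
          refine add_le_add ?_ ?_
          · refine Finset.sum_le_sum fun j _ => ?_
            rw [abs_mul, mul_comm]
            exact mul_le_mul_of_nonneg_right (hd2 ℓ j) (abs_nonneg _)
          · refine Finset.sum_le_sum fun i hi => ?_
            have hiℓ : i ≠ ℓ := Finset.ne_of_mem_erase hi
            rw [Finset.sum_eq_single ℓ
              (fun j _ hj => by rw [hd0 i j hiℓ hj, mul_zero, abs_zero])
              (fun h => absurd (Finset.mem_univ ℓ) h)]
            rw [abs_mul, mul_comm]
            exact mul_le_mul_of_nonneg_right (hd2 i ℓ) (abs_nonneg _)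
      _ ≤ 2 * Jbar + 2 * Jbar := by
          refine add_le_add ?_ ?_
          · rw [← Finset.mul_sum]
            exact mul_le_mul_of_nonneg_left (hJbar ℓ) (by norm_num)
          · calc ∑ i ∈ Finset.univ.erase ℓ, 2 * |J i ℓ|
                ≤ ∑ i, 2 * |J i ℓ| :=
                  Finset.sum_le_sum_of_subset_of_nonneg (Finset.erase_subset _ _)
                    (fun i _ _ => by positivity)
              _ = 2 * ∑ i, |J ℓ i| := by
                  rw [← Finset.mul_sum]
                  congr 1
                  exact Finset.sum_congr rfl fun i _ => by
                    rw [← hJsymm.apply i ℓ]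
              _ ≤ 2 * Jbar := mul_le_mul_of_nonneg_left (hJbar ℓ) (by norm_num)
      _ = 4 * Jbar := by ring
  calc isingEnergy0 J σ - isingEnergy0 J τ
      ≤ |isingEnergy0 J σ - isingEnergy0 J τ| := le_abs_self _
    _ = (1/2) * |∑ i, ∑ j, J i j * (s i * s j - t i * t j)| := by
        rw [hEdiff, abs_mul]; norm_num
    _ ≤ (1/2) * (4 * Jbar) := by
        exact mul_le_mul_of_nonneg_left habs (by norm_num)
    _ = 2 * Jbar := by ring


/-- The acceptance probability
`p_J(ℓ,k|σ,σ') = μ(S_ℓ(σ,σ'_k)) μ(S_k(σ',σ_ℓ)) / (μ(σ)μ(σ') + μ(S_ℓ(σ,σ'_k))μ(S_k(σ',σ_ℓ)))`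
satisfies `p_J(ℓ,k|σ,σ') ≥ 1/(1 + e^{4 J̄})`, where `J̄ ≥ max_i ∑_j |J_{ij}|`. -/
theorem acceptance_probability_lower_bound {n : ℕ} (J : Matrix (Fin n) (Fin n) ℝ)
    (hJsymm : J.IsSymm) (Jbar : ℝ) (hJbar : ∀ i, ∑ j, |J i j| ≤ Jbar)
    (ℓ k : Fin n) (σ σ' : Fin n → Bool) :
    1 / (1 + Real.exp (4 * Jbar)) ≤
      isingMeasure0 J (Function.update σ ℓ (σ' k)) *
          isingMeasure0 J (Function.update σ' k (σ ℓ)) /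
        (isingMeasure0 J σ * isingMeasure0 J σ' +
          isingMeasure0 J (Function.update σ ℓ (σ' k)) *
            isingMeasure0 J (Function.update σ' k (σ ℓ))) := by
  have hZ : 0 < ∑ τ : Fin n → Bool, Real.exp (isingEnergy0 J τ) :=
    Finset.sum_pos (fun τ _ => Real.exp_pos _) ⟨fun _ => true, Finset.mem_univ _⟩
  have hμpos : ∀ τ : Fin n → Bool, 0 < isingMeasure0 J τ := fun τ =>
    div_pos (Real.exp_pos _) hZ
  set A := isingMeasure0 J (Function.update σ ℓ (σ' k)) *
      isingMeasure0 J (Function.update σ' k (σ ℓ)) with hA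
  set B := isingMeasure0 J σ * isingMeasure0 J σ' with hB
  have hApos : 0 < A := mul_pos (hμpos _) (hμpos _)
  have hBpos : 0 < B := mul_pos (hμpos _) (hμpos _)
  have hBA : B ≤ A * Real.exp (4 * Jbar) := by
    have h1 := energy_update_le J hJsymm Jbar hJbar ℓ σ (σ' k)
    have h2 := energy_update_le J hJsymm Jbar hJbar k σ' (σ ℓ)
    have hE : isingEnergy0 J σ + isingEnergy0 J σ'
        ≤ isingEnergy0 J (Function.update σ ℓ (σ' k))
          + isingEnergy0 J (Function.update σ' k (σ ℓ)) + 4 * Jbar := by linarith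
    have : B = Real.exp (isingEnergy0 J σ + isingEnergy0 J σ')
        / ((∑ τ : Fin n → Bool, Real.exp (isingEnergy0 J τ))
          * (∑ τ : Fin n → Bool, Real.exp (isingEnergy0 J τ))) := by
      rw [hB]; unfold isingMeasure0; rw [Real.exp_add]; ring
    rw [this]
    have : A * Real.exp (4 * Jbar)
        = Real.exp (isingEnergy0 J (Function.update σ ℓ (σ' k))
            + isingEnergy0 J (Function.update σ' k (σ ℓ)) + 4 * Jbar)
          / ((∑ τ : Fin n → Bool, Real.exp (isingEnergy0 J τ))
            * (∑ τ : Fin n → Bool, Real.exp (isingEnergy0 J τ))) := by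
      rw [hA]; unfold isingMeasure0; rw [Real.exp_add, Real.exp_add]; ring
    rw [this]
    gcongr
  have hden : 0 < B + A := by linarith
  rw [div_le_div_iff₀ (by positivity) hden]
  nlinarith [Real.exp_pos (4 * Jbar)]
end

section
/- Let mu be a positive probability measure on a finite set Omega and Q a probability kernel on Omega x Omega satisfying detailed balance with respect to mu⊗mu. If p is a probability measure on Omega whose density f = p/mu satisfies f(tau)f(tau') = f(sigma)f(sigma') whenever Q(sigma,sigma';tau,tau') > 0, then p is stationary, i.e. p∘p = p where p∘p(tau) = sum_{sigma,sigma',tau'} p(sigma)p(sigma')Q(sigma,sigma';tau,tau'). -/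
open Finset

/-- If the density `f = p/μ` satisfies `f(τ)f(τ') = f(σ)f(σ')` whenever
`Q(σ,σ';τ,τ') > 0`, then `p` is stationary: `p∘p = p`. -/
theorem stationary_of_density_invariant {Ω : Type*} [Fintype Ω]
    (μ : Ω → ℝ) (hμpos : ∀ σ, 0 < μ σ) (hμ1 : ∑ σ, μ σ = 1)
    (Q : Ω → Ω → Ω → Ω → ℝ) (hQ0 : ∀ σ σ' τ τ', 0 ≤ Q σ σ' τ τ')
    (hQ1 : ∀ σ σ', ∑ τ, ∑ τ', Q σ σ' τ τ' = 1)
    (hdb : ∀ σ σ' τ τ', μ σ * μ σ' * Q σ σ' τ τ' = μ τ * μ τ' * Q τ τ' σ σ')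
    (p : Ω → ℝ) (hp0 : ∀ σ, 0 ≤ p σ) (hp1 : ∑ σ, p σ = 1)
    (f : Ω → ℝ) (hf : ∀ σ, f σ = p σ / μ σ)
    (hinv : ∀ σ σ' τ τ', 0 < Q σ σ' τ τ' → f τ * f τ' = f σ * f σ') :
    ∀ τ, (∑ σ, ∑ σ', ∑ τ', p σ * p σ' * Q σ σ' τ τ') = p τ := by
  intro τ
  have hfm : ∀ x, f x * μ x = p x := fun x => by
    rw [hf, div_mul_cancel₀ _ (hμpos x).ne']
  have key : ∀ σ σ' τ τ', p σ * p σ' * Q σ σ' τ τ' =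
      f τ * f τ' * (μ τ * μ τ') * Q τ τ' σ σ' := by
    intro σ σ' τ τ'
    rcases lt_or_eq_of_le (hQ0 τ τ' σ σ') with h | h
    · have hval := hinv τ τ' σ σ' h
      calc p σ * p σ' * Q σ σ' τ τ'
          = f σ * f σ' * (μ σ * μ σ' * Q σ σ' τ τ') := by
            rw [← hfm σ, ← hfm σ']; ring
        _ = f σ * f σ' * (μ τ * μ τ' * Q τ τ' σ σ') := by rw [hdb]
        _ = f τ * f τ' * (μ τ * μ τ') * Q τ τ' σ σ' := by rw [hval]; ring
    · have hQ' : Q τ τ' σ σ' = 0 := h.symm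
      have h0 : μ σ * μ σ' * Q σ σ' τ τ' = 0 := by rw [hdb, hQ', mul_zero]
      have h0' : Q σ σ' τ τ' = 0 := by
        rcases mul_eq_zero.mp h0 with h1 | h1
        · rcases mul_eq_zero.mp h1 with h2 | h2
          · exact absurd h2 (hμpos σ).ne'
          · exact absurd h2 (hμpos σ').ne'
        · exact h1
      rw [hQ', h0', mul_zero, mul_zero]
  calc (∑ σ, ∑ σ', ∑ τ', p σ * p σ' * Q σ σ' τ τ')
      = ∑ σ, ∑ σ', ∑ τ', f τ * f τ' * (μ τ * μ τ') * Q τ τ' σ σ' := by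
        exact Finset.sum_congr rfl fun σ _ => Finset.sum_congr rfl fun σ' _ =>
          Finset.sum_congr rfl fun τ' _ => key σ σ' τ τ'
    _ = ∑ τ', ∑ σ, ∑ σ', f τ * f τ' * (μ τ * μ τ') * Q τ τ' σ σ' := by
        conv_lhs => enter [2, σ]; rw [Finset.sum_comm]
        rw [Finset.sum_comm]
    _ = ∑ τ', f τ * f τ' * (μ τ * μ τ') * (∑ σ, ∑ σ', Q τ τ' σ σ') := by
        simp [Finset.mul_sum]
    _ = ∑ τ', f τ * f τ' * (μ τ * μ τ') := by
        simp [hQ1]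
    _ = f τ * μ τ * ∑ τ', f τ' * μ τ' := by
        rw [Finset.mul_sum]; exact Finset.sum_congr rfl fun τ' _ => by ring
    _ = p τ := by simp [hfm, hp1]
end

section
/- Let f : {-1,1}^n -> (0,infinity) satisfy the functional equation f(sigma)f(sigma') = f(S_l(sigma, sigma'_l)) f(S_l(sigma', sigma_l)) for all configurations sigma, sigma' and all sites l in [n] (exchange of spins at the same site l). Then there exist a constant C > 0 and a vector h in R^n such that f(sigma) = C exp(sum_{j} h_j sigma_j) for all sigma. -/
open Finset

/-- If `f : {-1,1}^n → (0,∞)` satisfies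
`f(σ)f(σ') = f(S_ℓ(σ,σ'_ℓ)) f(S_ℓ(σ',σ_ℓ))` for all `σ, σ'` and all sites `ℓ`,
then `f(σ) = C exp(∑_j h_j σ_j)` for some `C > 0` and `h ∈ ℝ^n`. -/
theorem same_site_exchange_density {n : ℕ} (f : (Fin n → Bool) → ℝ)
    (hfpos : ∀ σ, 0 < f σ)
    (hexch : ∀ (σ σ' : Fin n → Bool) (ℓ : Fin n),
      f σ * f σ' =
        f (Function.update σ ℓ (σ' ℓ)) * f (Function.update σ' ℓ (σ ℓ))) :
    ∃ (C : ℝ) (h : Fin n → ℝ), 0 < C ∧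
      ∀ σ, f σ = C * Real.exp (∑ j, h j * spin (σ j)) := by
  classical
  set τ : Fin n → Bool := fun _ => true with hτ
  set g : (Fin n → Bool) → ℝ := fun σ => Real.log (f σ) with hg
  have hgadd : ∀ σ σ' (ℓ : Fin n), g σ + g σ' =
      g (Function.update σ ℓ (σ' ℓ)) + g (Function.update σ' ℓ (σ ℓ)) := by
    intro σ σ' ℓ
    have h := hexch σ σ' ℓ
    simp only [hg]
    rw [← Real.log_mul (hfpos _).ne' (hfpos _).ne',
        ← Real.log_mul (hfpos _).ne' (hfpos _).ne', h]
  have hτup : ∀ j : Fin n, Function.update τ j true = τ := by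
    intro j; funext i
    by_cases hij : i = j <;> simp [hij, hτ]
  have key : ∀ (k : ℕ) (σ : Fin n → Bool),
      (univ.filter (fun j => σ j = false)).card = k →
      g σ = g τ + ∑ j, (g (Function.update τ j (σ j)) - g τ) := by
    intro k
    induction k with
    | zero =>
      intro σ hcard
      have hστ : σ = τ := by
        funext i
        have : i ∉ univ.filter (fun j => σ j = false) := by
          rw [Finset.card_eq_zero] at hcard
          simp [hcard]
        simpa [hτ] using this
      subst hστ
      simp [hτup]
    | succ k ih =>
      intro σ hcard
      have hne : (univ.filter (fun j => σ j = false)).Nonempty := by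
        rw [← Finset.card_pos, hcard]; omega
      obtain ⟨ℓ, hℓ⟩ := hne
      have hσℓ : σ ℓ = false := by simpa using hℓ
      set σ'' : Fin n → Bool := Function.update σ ℓ true with hσ''
      have hfilter : univ.filter (fun j => σ'' j = false)
          = (univ.filter (fun j => σ j = false)).erase ℓ := by
        ext i
        by_cases hiℓ : i = ℓ <;> simp [hσ'', hiℓ, Function.update_apply]
      have hcard'' : (univ.filter (fun j => σ'' j = false)).card = k := by
        rw [hfilter, Finset.card_erase_of_mem hℓ, hcard]; omega
      have h1 := hgadd σ τ ℓ
      have hτℓ : τ ℓ = true := rfl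
      rw [hτℓ, hσℓ] at h1
      have h2 := ih σ'' hcard''
      -- g σ = g σ'' + g (update τ ℓ false) - g τ
      have h3 : g σ = g σ'' + g (Function.update τ ℓ false) - g τ := by
        have : g σ + g τ = g σ'' + g (Function.update τ ℓ false) := h1
        linarith
      rw [h3, h2]
      have hsum : ∀ (ρ : Fin n → Bool),
          ∑ j, (g (Function.update τ j (ρ j)) - g τ)
            = ∑ j ∈ univ.erase ℓ, (g (Function.update τ j (ρ j)) - g τ)
              + (g (Function.update τ ℓ (ρ ℓ)) - g τ) := by
        intro ρ
        rw [Finset.sum_erase_add _ _ (Finset.mem_univ ℓ)]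
      rw [hsum σ, hsum σ'']
      have hterm : ∀ j ∈ univ.erase ℓ,
          (g (Function.update τ j (σ'' j)) - g τ)
            = (g (Function.update τ j (σ j)) - g τ) := by
        intro j hj
        have : j ≠ ℓ := (Finset.mem_erase.mp hj).1
        simp [hσ'', Function.update_apply, this]
      rw [Finset.sum_congr rfl hterm]
      have hℓtrue : σ'' ℓ = true := by simp [hσ'']
      rw [hℓtrue, hσℓ, hτup ℓ]
      ring
  set a : Fin n → ℝ := fun j => g (Function.update τ j false) - g τ with ha
  refine ⟨Real.exp (g τ + ∑ j, a j / 2), fun j => -(a j) / 2, Real.exp_pos _, ?_⟩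
  intro σ
  have hgσ := key ((univ.filter (fun j => σ j = false)).card) σ rfl
  rw [← Real.exp_log (hfpos σ), ← Real.exp_add]
  congr 1
  show g σ = _
  rw [hgσ, add_assoc]
  congr 1
  rw [← Finset.sum_add_distrib]
  refine Finset.sum_congr rfl fun j _ => ?_
  rcases Bool.eq_false_or_eq_true (σ j) with hb | hb <;>
    simp [hb, spin, hτup, ha] <;> ring
end
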